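/- The map h:ℕ→ℕ defined by h(n)=⌊φn⌋ if n∈R_{1,0}∪R_{2,0}, h(n)=⌊(φ−1)n⌋+2 if n∈R_{2,2}, and h(n)=⌊(φ−1)n⌋−1 if n∈R_{3,1}, is a well-defined bijection of ℕ onto itself whose fourth iterate is the identity and whose second iterate is not the identity; that is, h is a permutation of ℕ of order 4. -/

import Mathlib

/-- The golden ratio φ = (1 + √5)/2. -/
noncomputable def phi : ℝ := (1 + Real.sqrt 5) / 2

/-- The lower Wythoff sequence a(n) = ⌊nφ⌋. -/
noncomputable def wa (n : ℕ) : ℕ := ⌊(n : ℝ) * phi⌋₊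

/-- f_{i,j}(n) = F(i+1)·a(n) + F(i)·n − j. -/
noncomputable def fij (i : ℕ) (j : ℤ) (n : ℕ) : ℤ :=
  (Nat.fib (i + 1) : ℤ) * wa n + (Nat.fib i : ℤ) * n - j

/-- R_{i,j} = { f_{i,j}(n) : n ∈ ℕ, n ≥ 1 }. -/
def R (i : ℕ) (j : ℤ) : Set ℤ := {m | ∃ n : ℕ, 0 < n ∧ fij i j n = m}

open scoped Classical in
/-- h(n) = ⌊φn⌋ if n ∈ R_{1,0} ∪ R_{2,0}, ⌊(φ−1)n⌋+2 if n ∈ R_{2,2},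
and ⌊(φ−1)n⌋−1 if n ∈ R_{3,1}. -/
noncomputable def h (n : ℕ) : ℕ :=
  if (n : ℤ) ∈ R 1 0 ∪ R 2 0 then wa n
  else if (n : ℤ) ∈ R 2 2 then ⌊(phi - 1) * (n : ℝ)⌋₊ + 2
  else ⌊(phi - 1) * (n : ℝ)⌋₊ - 1

/-!
With `b(n) = a(n) + n`: since `1/φ + 1/φ² = 1`, Rayleigh's theorem says that `a` and `b`
partition the positive integers, and the bounds `a(n) < nφ < a(n) + 1` give
`a(a(n)) = b(n) - 1`, `a(b(n)) = a(n) + b(n)` and `⌊(φ - 1) a(n)⌋ = n - 1`.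
Consequently `R_{1,0}`, `R_{2,0}`, `R_{2,2}` are the images of `b`, `a ∘ b`, `a ∘ a ∘ a`, every
positive integer lies in exactly one of the images of `b`, `a ∘ b`, `a ∘ a ∘ b`, `a ∘ a ∘ a`, and
`h` permutes them cyclically: `b(m) ↦ a(b(m)) ↦ a(a(b(m))) ↦ a(a(a(m))) ↦ b(m)`.
-/

open Real goldenRatio

lemma phi_eq_goldenRatio : phi = φ := rfl

lemma one_lt_phi : 1 < phi := one_lt_goldenRatio

lemma phi_lt_two : phi < 2 := goldenRatio_lt_two

lemma phi_mul_self : phi * phi = phi + 1 := by rw [← sq]; exact goldenRatio_sq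

lemma wa_zero : wa 0 = 0 := by simp [wa]

lemma wa_le_mul_phi (n : ℕ) : (wa n : ℝ) ≤ n * phi :=
  Nat.floor_le (by rw [phi_eq_goldenRatio]; positivity)

lemma wa_lt_mul_phi {n : ℕ} (hn : 0 < n) : (wa n : ℝ) < n * phi :=
  (wa_le_mul_phi n).lt_of_ne
    ((goldenRatio_irrational.natCast_mul hn.ne').ne_nat (wa n)).symm

lemma mul_phi_lt_wa_add_one (n : ℕ) : n * phi < wa n + 1 := Nat.lt_floor_add_one _

lemma wa_eq_of_le_of_lt {n k : ℕ} (h₁ : (k : ℝ) ≤ n * phi) (h₂ : n * phi < k + 1) :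
    wa n = k :=
  (Nat.floor_eq_iff ((Nat.cast_nonneg k).trans h₁)).2 ⟨h₁, h₂⟩

lemma wa_strictMono : StrictMono wa := strictMono_nat_of_lt_succ fun n => by
  have hφ := one_lt_phi
  calc wa n < wa n + 1 := lt_add_one _
    _ = ⌊n * phi + 1⌋₊ := (Nat.floor_add_one (by positivity)).symm
    _ ≤ wa (n + 1) := Nat.floor_le_floor (by push_cast; linarith)

lemma wa_pos_iff {n : ℕ} : 0 < wa n ↔ 0 < n := by
  simpa [wa_zero] using wa_strictMono.lt_iff_lt (a := 0) (b := n)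

/-- The upper Wythoff sequence `b(n) = ⌊nφ²⌋ = a(n) + n`. -/
noncomputable def wb (n : ℕ) : ℕ := wa n + n

lemma wb_pos_iff {n : ℕ} : 0 < wb n ↔ 0 < n := by
  have := @wa_pos_iff n
  unfold wb
  omega

lemma holderConjugate_goldenRatio : Real.HolderConjugate φ (φ + 1) := by
  refine Real.holderConjugate_iff.2 ⟨one_lt_goldenRatio, ?_⟩
  rw [← goldenRatio_sq, ← inv_pow, inv_goldenRatio, neg_sq, goldenConj_sq]
  ring

lemma beattySeq_goldenRatio (n : ℕ) : beattySeq φ n = wa n := by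
  rw [beattySeq, Int.cast_natCast, wa,
    ← Int.natCast_floor_eq_floor (mul_nonneg n.cast_nonneg goldenRatio_pos.le)]
  rfl

lemma beattySeq_goldenRatio_add_one (n : ℕ) : beattySeq (φ + 1) n = wb n := by
  rw [beattySeq, Int.cast_natCast, mul_add_one, Int.floor_add_natCast, ← Int.cast_natCast,
    ← beattySeq, beattySeq_goldenRatio, wb, Nat.cast_add]

lemma natCast_mem_beattySeq_pos_iff {r : ℝ} {f : ℕ → ℕ}
    (hf : ∀ n : ℕ, beattySeq r n = f n) (n : ℕ) :
    (n : ℤ) ∈ {beattySeq r k | k > 0} ↔ ∃ m, 0 < m ∧ f m = n := by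
  constructor
  · rintro ⟨k, hk, hkn⟩
    lift k to ℕ using hk.le
    exact ⟨k, by exact_mod_cast hk, by rw [hf] at hkn; exact_mod_cast hkn⟩
  · rintro ⟨m, hm, rfl⟩
    exact ⟨m, by exact_mod_cast hm, hf m⟩

lemma wa_xor_wb {n : ℕ} (hn : 0 < n) :
    Xor (∃ m, 0 < m ∧ wa m = n) (∃ m, 0 < m ∧ wb m = n) := by
  have := (goldenRatio_irrational.beattySeq_symmDiff_beattySeq_pos
    holderConjugate_goldenRatio).ge (show (0 : ℤ) < n by exact_mod_cast hn)
  rwa [Set.mem_symmDiff, natCast_mem_beattySeq_pos_iff beattySeq_goldenRatio,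
    natCast_mem_beattySeq_pos_iff beattySeq_goldenRatio_add_one] at this

lemma exists_wa_eq_or_exists_wb_eq {n : ℕ} (hn : 0 < n) :
    (∃ m, 0 < m ∧ wa m = n) ∨ ∃ m, 0 < m ∧ wb m = n :=
  (wa_xor_wb hn).or

lemma wa_ne_wb {m m' : ℕ} (hm' : 0 < m') : wa m ≠ wb m' := by
  intro h
  have hm : 0 < m := wa_pos_iff.1 (h ▸ wb_pos_iff.2 hm')
  exact (xor_iff_or_and_not_and _ _).1 (wa_xor_wb (wb_pos_iff.2 hm')) |>.2
    ⟨⟨m, hm, h⟩, ⟨m', hm', rfl⟩⟩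

lemma wa_wb (n : ℕ) : wa (wb n) = wa n + wb n := by
  have hφ := one_lt_phi
  have hφ' := phi_lt_two
  have hsq := phi_mul_self
  have hlo := wa_le_mul_phi n
  have hhi := mul_phi_lt_wa_add_one n
  -- with `x = nφ - a(n) ∈ [0, 1)`, `b(n) φ = a(n) + b(n) + x (2 - φ)`
  apply wa_eq_of_le_of_lt <;> push_cast [wb] <;>
    nlinarith [mul_le_mul_of_nonneg_right hlo (by linarith : (0 : ℝ) ≤ 2 - phi),
      mul_lt_mul_of_pos_right hhi (by linarith : (0 : ℝ) < 2 - phi)]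

lemma sub_one_lt_phi_sub_one_mul_wa {n : ℕ} (hn : 0 < n) :
    (n : ℝ) - 1 < (phi - 1) * wa n ∧ (phi - 1) * wa n < n := by
  -- with `x = nφ - a(n) ∈ (0, 1)`, `(φ - 1) a(n) = n - x (φ - 1)`
  have hφ := one_lt_phi
  have hφ' := phi_lt_two
  have hsq := phi_mul_self
  have hlo := mul_lt_mul_of_pos_right (wa_lt_mul_phi hn) (by linarith : (0 : ℝ) < phi - 1)
  have hhi := mul_lt_mul_of_pos_right (mul_phi_lt_wa_add_one n) (by linarith : (0 : ℝ) < phi - 1)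
  constructor <;> nlinarith

lemma floor_phi_sub_one_mul_wa {n : ℕ} (hn : 0 < n) : ⌊(phi - 1) * wa n⌋₊ = n - 1 := by
  obtain ⟨hlo, hhi⟩ := sub_one_lt_phi_sub_one_mul_wa hn
  rw [Nat.floor_eq_iff (by linarith [show (1 : ℝ) ≤ n by exact_mod_cast hn]),
    Nat.cast_sub hn, Nat.cast_one, sub_add_cancel]
  exact ⟨hlo.le, hhi⟩

lemma wa_wa_add_one {n : ℕ} (hn : 0 < n) : wa (wa n) + 1 = wb n := by
  have hnonneg : 0 ≤ (phi - 1) * wa n :=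
    mul_nonneg (by linarith [one_lt_phi]) (Nat.cast_nonneg _)
  have : wa (wa n) = ⌊(phi - 1) * wa n⌋₊ + wa n := by
    rw [← Nat.floor_add_natCast hnonneg, wa]
    congr 1
    ring
  rw [this, floor_phi_sub_one_mul_wa hn, wb]
  omega

lemma natCast_mem_R_iff {i : ℕ} {j : ℤ} {g : ℕ → ℕ} (hg : ∀ m, 0 < m → fij i j m = g m)
    (n : ℕ) : (n : ℤ) ∈ R i j ↔ ∃ m, 0 < m ∧ g m = n :=
  exists_congr fun m => and_congr_right fun hm => by rw [hg m hm, Nat.cast_inj]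

lemma natCast_mem_R_one_zero_iff (n : ℕ) :
    (n : ℤ) ∈ R 1 0 ↔ ∃ m, 0 < m ∧ wb m = n :=
  natCast_mem_R_iff (fun m _ => by simp [fij, wb]) n

lemma natCast_mem_R_two_zero_iff (n : ℕ) :
    (n : ℤ) ∈ R 2 0 ↔ ∃ m, 0 < m ∧ wa (wb m) = n :=
  natCast_mem_R_iff (fun m _ => by rw [wa_wb]; simp [fij, wb]; ring) n

lemma natCast_mem_R_two_two_iff (n : ℕ) :
    (n : ℤ) ∈ R 2 2 ↔ ∃ m, 0 < m ∧ wa (wa (wa m)) = n :=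
  natCast_mem_R_iff (fun m hm => by
    have h₁ := wa_wa_add_one hm
    have h₂ := wa_wa_add_one (wa_pos_iff.2 hm)
    simp only [wb] at h₁ h₂
    simp [fij, Nat.fib_add_two]
    omega) n

lemma h_wb {m : ℕ} (hm : 0 < m) : h (wb m) = wa (wb m) := by
  rw [h, if_pos (Set.mem_union_left _ ((natCast_mem_R_one_zero_iff _).2 ⟨m, hm, rfl⟩))]

lemma h_wa_wb {m : ℕ} (hm : 0 < m) : h (wa (wb m)) = wa (wa (wb m)) := by
  rw [h, if_pos (Set.mem_union_right _ ((natCast_mem_R_two_zero_iff _).2 ⟨m, hm, rfl⟩))]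

lemma h_wa_wa_wb {m : ℕ} (hm : 0 < m) : h (wa (wa (wb m))) = wa (wa (wa m)) := by
  have hab : 0 < wa (wb m) := wa_pos_iff.2 (wb_pos_iff.2 hm)
  rw [h, if_neg, if_neg, floor_phi_sub_one_mul_wa hab]
  · have h₁ := wa_wa_add_one hm
    have h₂ := wa_wa_add_one (wa_pos_iff.2 hm)
    have h₃ := wa_wb m
    unfold wb at *
    omega
  · rw [natCast_mem_R_two_two_iff]
    rintro ⟨m', hm', e⟩
    exact wa_ne_wb hm (wa_strictMono.injective (wa_strictMono.injective e))
  · rw [Set.mem_union, natCast_mem_R_one_zero_iff, natCast_mem_R_two_zero_iff]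
    rintro (⟨m', hm', e⟩ | ⟨m', hm', e⟩)
    · exact wa_ne_wb hm' e.symm
    · exact wa_ne_wb hm' (wa_strictMono.injective e).symm

lemma h_wa_wa_wa {m : ℕ} (hm : 0 < m) : h (wa (wa (wa m))) = wb m := by
  have haa : 0 < wa (wa m) := wa_pos_iff.2 (wa_pos_iff.2 hm)
  rw [h, if_neg, if_pos ((natCast_mem_R_two_two_iff _).2 ⟨m, hm, rfl⟩),
    floor_phi_sub_one_mul_wa haa, ← wa_wa_add_one hm]
  · omega
  · rw [Set.mem_union, natCast_mem_R_one_zero_iff, natCast_mem_R_two_zero_iff]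
    rintro (⟨m', hm', e⟩ | ⟨m', hm', e⟩)
    · exact wa_ne_wb hm' e.symm
    · exact wa_ne_wb hm' (wa_strictMono.injective e).symm

lemma exists_eq_wb_or_wa_wb_or_wa_wa_wb_or_wa_wa_wa {n : ℕ} (hn : 0 < n) : ∃ m, 0 < m ∧
    (n = wb m ∨ n = wa (wb m) ∨ n = wa (wa (wb m)) ∨ n = wa (wa (wa m))) := by
  rcases exists_wa_eq_or_exists_wb_eq hn with ⟨k, hk, rfl⟩ | ⟨m, hm, rfl⟩
  · rcases exists_wa_eq_or_exists_wb_eq hk with ⟨l, hl, rfl⟩ | ⟨m, hm, rfl⟩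
    · rcases exists_wa_eq_or_exists_wb_eq hl with ⟨m, hm, rfl⟩ | ⟨m, hm, rfl⟩
      · exact ⟨m, hm, by tauto⟩
      · exact ⟨m, hm, by tauto⟩
    · exact ⟨m, hm, by tauto⟩
  · exact ⟨m, hm, by tauto⟩

lemma h_pos {n : ℕ} (hn : 0 < n) : 0 < h n := by
  obtain ⟨m, hm, rfl | rfl | rfl | rfl⟩ := exists_eq_wb_or_wa_wb_or_wa_wa_wb_or_wa_wa_wa hn <;>
    simp [h_wb, h_wa_wb, h_wa_wa_wb, h_wa_wa_wa, wa_pos_iff, wb_pos_iff, hm]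

lemma h_iterate_four {n : ℕ} (hn : 0 < n) : h^[4] n = n := by
  obtain ⟨m, hm, rfl | rfl | rfl | rfl⟩ := exists_eq_wb_or_wa_wb_or_wa_wa_wb_or_wa_wa_wa hn <;>
    simp only [Function.iterate_succ_apply, Function.iterate_zero_apply,
      h_wb hm, h_wa_wb hm, h_wa_wa_wb hm, h_wa_wa_wa hm]

theorem stmt_9 :
    Set.BijOn h {n : ℕ | 0 < n} {n : ℕ | 0 < n} ∧
    (∀ n : ℕ, 0 < n → h^[4] n = n) ∧
    (∃ n : ℕ, 0 < n ∧ h^[2] n ≠ n) := by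
  have h_mapsTo : Set.MapsTo h {n | 0 < n} {n | 0 < n} := fun _ => h_pos
  have h_invOn : Set.InvOn h^[3] h {n | 0 < n} {n | 0 < n} :=
    ⟨fun _ => h_iterate_four, fun _ => h_iterate_four⟩
  refine ⟨h_invOn.bijOn h_mapsTo (h_mapsTo.iterate 3), fun _ => h_iterate_four,
    wb 1, wb_pos_iff.2 one_pos, ?_⟩
  change h (h (wb 1)) ≠ wb 1
  rw [h_wb one_pos, h_wa_wb one_pos]
  exact wa_ne_wb one_pos
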